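/- arXiv:2403.09348 — 3 statements merged into one kernel-verified Lean document; each statement's English description precedes it below -/
import Mathlib

section
/- For each partition λ of n, let p_λ denote the product of power sums p_{λ_j} = x_1^{λ_j} + ... + x_n^{λ_j}. Then the monomial x_1·x_2·...·x_n equals the sum over all partitions λ of n of (-1)^{n+ℓ(λ)} · (1 / ∏_i (k_i! · m_i^{k_i})) · p_λ, where λ has k_i parts equal to m_i and ℓ(λ) is the length of λ. -/
open MvPolynomial Finset

/-!
Write `c_λ = (-1)^(|λ| + ℓ(λ)) / z_λ` and `E_k = ∑_{λ ⊢ k} c_λ p_λ`. For a part `j` of `λ` one has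
`z_λ = j m_j(λ) z_(λ∖j)`, hence `j m_j(λ) c_λ = (-1)^(j+1) c_(λ∖j)`. Expanding `k = ∑_j j m_j(λ)`
and reindexing the pairs (`λ ⊢ k`, part `j` of `λ`) by (`j`, `λ∖j ⊢ k - j`) gives
`k E_k = ∑_{j=1}^k (-1)^(j+1) E_(k-j) p_j`. This is Newton's recursion for the elementary symmetric
polynomials, which over `ℚ` determines them from `e_0 = 1`; so `E_k = e_k`, and `e_n = x₁ ⋯ xₙ`.
-/

/-- `z_λ`, the order of the centralizer of a permutation of cycle type `λ`. -/
def centralizerCard (s : Multiset ℕ) : ℕ :=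
  ∏ a ∈ s.toFinset, (s.count a).factorial * a ^ s.count a

lemma centralizerCard_eq_prod_of_subset {s : Multiset ℕ} {S : Finset ℕ} (h : s.toFinset ⊆ S) :
    centralizerCard s = ∏ a ∈ S, (s.count a).factorial * a ^ s.count a :=
  prod_subset h fun a _ ha => by simp [Multiset.count_eq_zero.mpr (by simpa using ha)]

lemma centralizerCard_cons (j : ℕ) (t : Multiset ℕ) :
    centralizerCard (j ::ₘ t) = j * (t.count j + 1) * centralizerCard t := by
  set S := insert j t.toFinset
  have hjS : j ∈ S := mem_insert_self j _
  rw [centralizerCard_eq_prod_of_subset (S := S) (by simp [S]),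
    centralizerCard_eq_prod_of_subset (subset_insert j _), ← mul_prod_erase S _ hjS,
    ← mul_prod_erase S _ hjS, Multiset.count_cons_self, Nat.factorial_succ, pow_succ]
  rw [prod_congr rfl fun a ha => by rw [Multiset.count_cons_of_ne (ne_of_mem_erase ha)]]
  ring

def esymmPsumCoeff (s : Multiset ℕ) : ℚ :=
  (-1) ^ (s.sum + Multiset.card s) * (centralizerCard s : ℚ)⁻¹

lemma mul_esymmPsumCoeff_cons {j : ℕ} (hj : j ≠ 0) (t : Multiset ℕ) :
    j * (j ::ₘ t).count j * esymmPsumCoeff (j ::ₘ t) = (-1) ^ (j + 1) * esymmPsumCoeff t := by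
  have hz : (j * (t.count j + 1) : ℚ) ≠ 0 := by positivity
  rw [esymmPsumCoeff, esymmPsumCoeff, centralizerCard_cons, Multiset.count_cons_self,
    Multiset.sum_cons, Multiset.card_cons]
  push_cast
  rw [mul_inv]
  linear_combination
    ((-1) ^ (j + t.sum + (t.card + 1)) * (centralizerCard t : ℚ)⁻¹) * mul_inv_cancel₀ hz

lemma Nat.Partition.sum_sum_toFinset_parts_eq_sum_Icc {M : Type*} [AddCommMonoid M] (k : ℕ)
    (G : Multiset ℕ → ℕ → M) :
    ∑ p : k.Partition, ∑ j ∈ p.parts.toFinset, G p.parts j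
      = ∑ j ∈ Icc 1 k, ∑ q : (k - j).Partition, G (j ::ₘ q.parts) j := by
  rw [sum_sigma', sum_sigma']
  refine sum_bij'
    (fun x hx => ⟨x.2, ⟨x.1.parts.erase x.2, fun hi => x.1.parts_pos (Multiset.mem_of_mem_erase hi),
      by
        have hj : x.2 ∈ x.1.parts := by simpa using hx
        have := x.1.parts_sum
        rw [← Multiset.cons_erase hj, Multiset.sum_cons] at this
        omega⟩⟩)
    (fun y hy => ⟨⟨y.1 ::ₘ y.2.parts,
      fun hi => (Multiset.mem_cons.mp hi).elim (fun h => h ▸ (mem_Icc.mp (mem_sigma.mp hy).1).1)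
        y.2.parts_pos,
      by
        have := (mem_Icc.mp (mem_sigma.mp hy).1).2
        rw [Multiset.sum_cons, y.2.parts_sum]
        omega⟩, y.1⟩) ?_ ?_ ?_ ?_ ?_
  · intro x hx
    have hj : x.2 ∈ x.1.parts := by simpa using hx
    simpa using ⟨x.1.parts_pos hj, x.1.le_of_mem_parts hj⟩
  · intro y _
    simp
  · intro x hx
    have hj : x.2 ∈ x.1.parts := by simpa using hx
    ext : 1
    · exact Nat.Partition.ext (Multiset.cons_erase hj)
    · rfl
  · intro y _
    simp
  · intro x hx
    have hj : x.2 ∈ x.1.parts := by simpa using hx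
    simp [Multiset.cons_erase hj]

namespace MvPolynomial

theorem esymm_card (σ R : Type*) [Fintype σ] [CommSemiring R] :
    esymm σ R (Fintype.card σ) = ∏ i, X i := by
  rw [esymm, ← card_univ, powersetCard_self, sum_singleton]

theorem mul_esymm_eq_sum_Icc (σ R : Type*) [Fintype σ] [CommRing R] (k : ℕ) :
    (k : MvPolynomial σ R) * esymm σ R k
      = ∑ j ∈ Icc 1 k, (-1) ^ (j + 1) * esymm σ R (k - j) * psum σ R j := by
  rw [mul_esymm_eq_sum, mul_sum]
  refine sum_nbij' Prod.snd (fun j => (k - j, j)) ?_ ?_ ?_ ?_ ?_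
  · rintro ⟨a, j⟩ h
    simp only [mem_filter, HasAntidiagonal.mem_antidiagonal] at h
    simp only [mem_Icc]
    omega
  · intro j hj
    simp only [mem_Icc] at hj
    simp only [mem_filter, HasAntidiagonal.mem_antidiagonal]
    omega
  · rintro ⟨a, j⟩ h
    simp only [mem_filter, HasAntidiagonal.mem_antidiagonal] at h
    simp only [Prod.mk.injEq, and_true]
    omega
  · intro j _
    rfl
  · rintro ⟨a, j⟩ h
    simp only [mem_filter, HasAntidiagonal.mem_antidiagonal] at h
    obtain rfl : k = a + j := h.1.symm
    have hsign : (-1 : MvPolynomial σ R) ^ (a + j + 1) * (-1) ^ a = (-1) ^ (j + 1) := by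
      rw [← pow_add, show a + j + 1 + a = (j + 1) + 2 * a by ring, pow_add, pow_mul]
      simp
    rw [Nat.add_sub_cancel, ← hsign]
    ring

variable (σ R : Type*) [Fintype σ] [CommRing R] [Algebra ℚ R]

theorem mul_sum_psumPart_eq_sum_Icc (k : ℕ) :
    (k : MvPolynomial σ R) *
        ∑ p : k.Partition, algebraMap ℚ _ (esymmPsumCoeff p.parts) * psumPart σ R p
      = ∑ j ∈ Icc 1 k, (-1) ^ (j + 1) *
          (∑ q : (k - j).Partition, algebraMap ℚ _ (esymmPsumCoeff q.parts) * psumPart σ R q) *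
            psum σ R j := by
  calc _ = ∑ p : k.Partition, ∑ j ∈ p.parts.toFinset,
          algebraMap ℚ (MvPolynomial σ R) (j * p.parts.count j * esymmPsumCoeff p.parts) *
            (p.parts.map (psum σ R)).prod := by
        rw [mul_sum]
        refine sum_congr rfl fun p _ => ?_
        have hk : (k : ℚ) = ∑ j ∈ p.parts.toFinset, (j : ℚ) * p.parts.count j := by
          exact_mod_cast p.parts_sum.symm.trans <| (sum_multiset_count p.parts).trans <|
            sum_congr rfl fun j _ => by rw [smul_eq_mul, mul_comm]
        rw [← map_natCast (algebraMap ℚ (MvPolynomial σ R)) k, hk, map_sum, sum_mul]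
        exact sum_congr rfl fun j _ => by simp only [map_mul, psumPart]; ring
    _ = ∑ j ∈ Icc 1 k, ∑ q : (k - j).Partition,
          algebraMap ℚ (MvPolynomial σ R)
              (j * (j ::ₘ q.parts).count j * esymmPsumCoeff (j ::ₘ q.parts)) *
            ((j ::ₘ q.parts).map (psum σ R)).prod :=
        Nat.Partition.sum_sum_toFinset_parts_eq_sum_Icc k fun s j =>
          algebraMap ℚ _ (j * s.count j * esymmPsumCoeff s) * (s.map (psum σ R)).prod
    _ = _ := by
        refine sum_congr rfl fun j hj => ?_
        rw [mul_sum, sum_mul]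
        refine sum_congr rfl fun q _ => ?_
        rw [mul_esymmPsumCoeff_cons (by grind) q.parts, Multiset.map_cons, Multiset.prod_cons,
          map_mul, map_pow, map_neg, map_one]
        simp only [psumPart]
        ring

theorem esymm_eq_sum_psumPart (k : ℕ) :
    esymm σ R k = ∑ p : k.Partition, algebraMap ℚ _ (esymmPsumCoeff p.parts) * psumPart σ R p := by
  induction k using Nat.strong_induction_on with
  | _ k ih =>
  rcases k.eq_zero_or_pos with rfl | hk
  · simp [esymmPsumCoeff, centralizerCard, psumPart]
  · have hk_unit : IsUnit (k : MvPolynomial σ R) := by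
      rw [← map_natCast (algebraMap ℚ _)]
      exact (Nat.cast_ne_zero.mpr hk.ne').isUnit.map _
    refine hk_unit.mul_left_cancel ?_
    rw [mul_esymm_eq_sum_Icc, mul_sum_psumPart_eq_sum_Icc]
    exact sum_congr rfl fun j hj => by rw [ih (k - j) (by grind)]

end MvPolynomial

theorem prod_X_eq_sum_partitions_psum_general (n : ℕ) :
    (∏ i : Fin n, MvPolynomial.X i : MvPolynomial (Fin n) ℚ)
      = ∑ lam : Nat.Partition n,
          ((-1 : ℚ) ^ (n + Multiset.card lam.parts) *
              (∏ a ∈ lam.parts.toFinset,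
                ((lam.parts.count a).factorial * (a : ℚ) ^ lam.parts.count a))⁻¹)
            • (lam.parts.map fun j => MvPolynomial.psum (Fin n) ℚ j).prod := by
  have he := esymm_card (Fin n) ℚ
  rw [Fintype.card_fin] at he
  rw [← he, esymm_eq_sum_psumPart]
  refine sum_congr rfl fun p _ => ?_
  rw [Algebra.smul_def, esymmPsumCoeff, p.parts_sum, centralizerCard]
  push_cast
  rfl

/-- Power-sum expansion of the monomial `x₁ ⋯ xₙ` (the elementary symmetric polynomial `eₙ`):
`x₁⋯xₙ = ∑_{|λ|=n} (-1)^{n+ℓ(λ)} (∏ᵢ kᵢ! mᵢ^{kᵢ})⁻¹ p_λ`, where the sum runs over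
partitions `λ` of `n`, `mᵢ` are the distinct parts of `λ`, `kᵢ` their multiplicities and
`ℓ(λ)` the number of parts. -/
theorem prod_X_eq_sum_partitions_psum (n : ℕ) (hn : 0 < n) :
    (∏ i : Fin n, MvPolynomial.X i : MvPolynomial (Fin n) ℚ)
      = ∑ lam : Nat.Partition n,
          ((-1 : ℚ) ^ (n + Multiset.card lam.parts) *
              (∏ a ∈ lam.parts.toFinset,
                ((lam.parts.count a).factorial * (a : ℚ) ^ lam.parts.count a))⁻¹)
            • (lam.parts.map fun j => MvPolynomial.psum (Fin n) ℚ j).prod :=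
  prod_X_eq_sum_partitions_psum_general n
end

section
/- For a homogeneous polynomial f_k of degree k in n variables: if k is odd then ∫_{S^{n-1}} f_k dS = 0, and if k is even then ∫_{S^{n-1}} f_k dS = ((n-2)!! · vol(S^{n-1}) / (k!! · (n+k-2)!!)) · Δ^{k/2}(f_k), where Δ^{k/2}(f_k) is a constant. -/
/-!
Integrate `p(x) e^{-‖x‖²/2}` over `ℝⁿ` in two ways. In polar coordinates it is
`(∫_{S^{n-1}} p) · J(n-1+k)`, where `J m = ∫_0^∞ r^m e^{-r²/2} dr`. Odd `k`: the integral
vanishes by the symmetry `x ↦ -x`. Even `k`: Gaussian integration by parts,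
`∫ ∂ᵢq · e^{-‖x‖²/2} = ∫ xᵢ q · e^{-‖x‖²/2}`, together with Euler's identity `∑ xᵢ ∂ᵢp = k p`
shows that `Δ` multiplies the Gaussian integral of a degree-`k` form by `k`; iterating `k/2`
times reduces `p` to the constant `Δ^{k/2} p`, whose Gaussian integral is
`Δ^{k/2} p · vol(S^{n-1}) · J(n-1)`. The recursion `J(m+2) = (m+1) J(m)` turns
`J(n-1+k) / J(n-1)` into `(n+k-2)‼ / (n-2)‼`.
-/

open MvPolynomial Finset Metric MeasureTheory Nat Real Set Filter Topology

noncomputable def gaussianWeight (t : ℝ) : ℝ := exp (-(1 / 2) * t ^ 2)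

lemma gaussianWeight_pos (t : ℝ) : 0 < gaussianWeight t := exp_pos _

lemma gaussianWeight_neg (t : ℝ) : gaussianWeight (-t) = gaussianWeight t := by
  simp [gaussianWeight]

lemma hasDerivAt_gaussianWeight (t : ℝ) : HasDerivAt gaussianWeight (-t * gaussianWeight t) t := by
  unfold gaussianWeight
  convert ((hasDerivAt_pow 2 t).const_mul (-(1 / 2 : ℝ))).exp using 1
  push_cast
  ring

lemma integrable_pow_mul_gaussianWeight (m : ℕ) :
    Integrable fun t : ℝ => t ^ m * gaussianWeight t := by
  simpa [gaussianWeight, rpow_natCast] using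
    integrable_rpow_mul_exp_neg_mul_sq (b := 1 / 2) (by norm_num) (s := m)
      (neg_one_lt_zero.trans_le m.cast_nonneg)

lemma tendsto_pow_mul_gaussianWeight_cocompact (m : ℕ) :
    Tendsto (fun t : ℝ => t ^ m * gaussianWeight t) (cocompact ℝ) (𝓝 0) := by
  refine squeeze_zero_norm (fun t => le_of_eq ?_)
    (tendsto_rpow_abs_mul_exp_neg_mul_sq_cocompact (a := 1 / 2) (by norm_num) m)
  simp [gaussianWeight, rpow_natCast]

lemma hasDerivAt_pow_succ_mul_gaussianWeight (m : ℕ) (t : ℝ) :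
    HasDerivAt (fun t : ℝ => t ^ (m + 1) * gaussianWeight t)
      ((m + 1) * (t ^ m * gaussianWeight t) - t ^ (m + 2) * gaussianWeight t) t := by
  refine ((hasDerivAt_pow (m + 1) t).mul (hasDerivAt_gaussianWeight t)).congr_deriv ?_
  push_cast
  ring

noncomputable def gaussianMoment (m : ℕ) : ℝ := ∫ t, t ^ m * gaussianWeight t

noncomputable def halfGaussianMoment (m : ℕ) : ℝ := ∫ t in Ioi 0, t ^ m * gaussianWeight t

lemma gaussianMoment_add_two (m : ℕ) :
    gaussianMoment (m + 2) = (m + 1) * gaussianMoment m := by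
  have h := integral_of_hasDerivAt_of_tendsto (hasDerivAt_pow_succ_mul_gaussianWeight m)
    (((integrable_pow_mul_gaussianWeight m).const_mul _).sub
      (integrable_pow_mul_gaussianWeight (m + 2)))
    ((tendsto_pow_mul_gaussianWeight_cocompact _).mono_left atBot_le_cocompact)
    ((tendsto_pow_mul_gaussianWeight_cocompact _).mono_left atTop_le_cocompact)
  rw [integral_sub ((integrable_pow_mul_gaussianWeight m).const_mul _)
    (integrable_pow_mul_gaussianWeight (m + 2)), integral_const_mul] at h
  rw [gaussianMoment, gaussianMoment]
  linarith

lemma halfGaussianMoment_add_two (m : ℕ) :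
    halfGaussianMoment (m + 2) = (m + 1) * halfGaussianMoment m := by
  have h := integral_Ioi_of_hasDerivAt_of_tendsto' (a := 0)
    (fun t _ => hasDerivAt_pow_succ_mul_gaussianWeight m t)
    ((((integrable_pow_mul_gaussianWeight m).const_mul _).sub
      (integrable_pow_mul_gaussianWeight (m + 2))).integrableOn)
    ((tendsto_pow_mul_gaussianWeight_cocompact _).mono_left atTop_le_cocompact)
  rw [integral_sub ((integrable_pow_mul_gaussianWeight m).const_mul _).integrableOn
    (integrable_pow_mul_gaussianWeight (m + 2)).integrableOn, integral_const_mul] at h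
  rw [halfGaussianMoment, halfGaussianMoment]
  rw [zero_pow (succ_ne_zero m), zero_mul, sub_self] at h
  linarith

lemma gaussianMoment_of_odd {m : ℕ} (hm : Odd m) : gaussianMoment m = 0 := by
  have h := integral_neg_eq_self (fun t : ℝ => t ^ m * gaussianWeight t) volume
  simp only [hm.neg_pow, gaussianWeight_neg, neg_mul, integral_neg] at h
  rw [gaussianMoment]
  linarith

lemma gaussianMoment_succ (m : ℕ) : gaussianMoment (m + 1) = m * gaussianMoment (m - 1) := by
  cases m with
  | zero => simp [gaussianMoment_of_odd odd_one]
  | succ m => exact mod_cast gaussianMoment_add_two m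

lemma halfGaussianMoment_pos (m : ℕ) : 0 < halfGaussianMoment m := by
  have hpos : ∀ t ∈ Ioi (0 : ℝ), 0 < t ^ m * gaussianWeight t :=
    fun t ht => mul_pos (pow_pos ht m) (gaussianWeight_pos t)
  refine (setIntegral_pos_iff_support_of_nonneg_ae ?_
    (integrable_pow_mul_gaussianWeight m).integrableOn).mpr ?_
  · filter_upwards [ae_restrict_mem measurableSet_Ioi] with t ht using (hpos t ht).le
  · rw [inter_eq_self_of_subset_right
      (show Ioi (0 : ℝ) ⊆ Function.support _ from fun t ht => (hpos t ht).ne')]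
    simp

lemma halfGaussianMoment_add_two_mul (q m : ℕ) :
    halfGaussianMoment (q + 1 + 2 * m) * q‼ = (q + 2 * m)‼ * halfGaussianMoment (q + 1) := by
  induction m with
  | zero => simp [mul_comm]
  | succ m ih =>
    rw [show q + 1 + 2 * (m + 1) = q + 1 + 2 * m + 2 by ring,
      show q + 2 * (m + 1) = q + 2 * m + 2 by ring, halfGaussianMoment_add_two,
      Nat.doubleFactorial_add_two]
    push_cast at ih ⊢
    linear_combination ((q : ℝ) + 2 * m + 2) * ih

namespace MvPolynomial

variable {σ R : Type*} [CommSemiring R]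

lemma IsHomogeneous.eval_smul {p : MvPolynomial σ R} {k : ℕ} (hp : p.IsHomogeneous k)
    (c : R) (x : σ → R) : eval (c • x) p = c ^ k * eval x p := by
  conv_lhs => rw [p.as_sum]
  conv_rhs => rw [p.as_sum]
  simp only [map_sum, eval_monomial, Finset.mul_sum]
  refine Finset.sum_congr rfl fun d hd => ?_
  simp only [Pi.smul_apply, smul_eq_mul, mul_pow, Finsupp.prod_mul]
  rw [Finsupp.prod, Finset.prod_pow_eq_pow_sum, ← hp.degree_eq_sum_deg_support hd]
  ring

variable [Fintype σ]

noncomputable def laplacian (p : MvPolynomial σ R) : MvPolynomial σ R := ∑ i, pderiv i (pderiv i p)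

lemma IsHomogeneous.laplacian {p : MvPolynomial σ R} {k : ℕ} (hp : p.IsHomogeneous (k + 2)) :
    (laplacian p).IsHomogeneous k :=
  IsHomogeneous.sum _ _ _ fun _ _ => hp.pderiv.pderiv

end MvPolynomial

section Gaussian

variable {n : ℕ}

lemma gaussianWeight_norm (x : EuclideanSpace ℝ (Fin n)) :
    gaussianWeight ‖x‖ = ∏ i, gaussianWeight (x i) := by
  rw [gaussianWeight, EuclideanSpace.norm_eq, sq_sqrt (by positivity), Finset.mul_sum, exp_sum]
  simp [gaussianWeight]

lemma eval_monomial_mul_gaussianWeight_norm (d : Fin n →₀ ℕ) (c : ℝ)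
    (x : EuclideanSpace ℝ (Fin n)) :
    eval (fun i => x i) (monomial d c) * gaussianWeight ‖x‖
      = c * ∏ i, (x i ^ d i * gaussianWeight (x i)) := by
  rw [eval_monomial, gaussianWeight_norm, Finsupp.prod_fintype _ _ fun _ => pow_zero _,
    Finset.prod_mul_distrib, mul_assoc]

lemma integrable_eval_mul_gaussianWeight_norm (p : MvPolynomial (Fin n) ℝ) :
    Integrable fun x : EuclideanSpace ℝ (Fin n) => eval (fun i => x i) p * gaussianWeight ‖x‖ := by
  induction p using MvPolynomial.induction_on' with
  | monomial d c =>
    simp only [eval_monomial_mul_gaussianWeight_norm]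
    rw [← (PiLp.volume_preserving_toLp (Fin n)).integrable_comp_emb
      (MeasurableEquiv.toLp 2 (Fin n → ℝ)).measurableEmbedding]
    exact (Integrable.fintype_prod fun i => integrable_pow_mul_gaussianWeight (d i)).const_mul c
  | add p q hp hq =>
    simp only [map_add, add_mul]
    exact hp.add hq

noncomputable def gaussianIntegral (n : ℕ) : MvPolynomial (Fin n) ℝ →ₗ[ℝ] ℝ where
  toFun p := ∫ x : EuclideanSpace ℝ (Fin n), eval (fun i => x i) p * gaussianWeight ‖x‖
  map_add' p q := by
    simp only [map_add, add_mul]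
    exact integral_add (integrable_eval_mul_gaussianWeight_norm p)
      (integrable_eval_mul_gaussianWeight_norm q)
  map_smul' c p := by
    simp only [smul_eval, mul_assoc, integral_const_mul, RingHom.id_apply, smul_eq_mul]

lemma gaussianIntegral_apply (p : MvPolynomial (Fin n) ℝ) :
    gaussianIntegral n p
      = ∫ x : EuclideanSpace ℝ (Fin n), eval (fun i => x i) p * gaussianWeight ‖x‖ := rfl

lemma gaussianIntegral_monomial (d : Fin n →₀ ℕ) (c : ℝ) :
    gaussianIntegral n (monomial d c) = c * ∏ i, gaussianMoment (d i) := by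
  simp only [gaussianIntegral_apply, eval_monomial_mul_gaussianWeight_norm]
  rw [← (PiLp.volume_preserving_toLp (Fin n)).integral_comp'
    (f := (MeasurableEquiv.toLp 2 (Fin n → ℝ)))]
  simp only [MeasurableEquiv.toLp_apply, PiLp.toLp_apply, integral_const_mul]
  rw [integral_fintype_prod_volume_eq_prod (fun i (t : ℝ) => t ^ d i * gaussianWeight t)]
  rfl

lemma gaussianIntegral_pderiv (i : Fin n) (p : MvPolynomial (Fin n) ℝ) :
    gaussianIntegral n (pderiv i p) = gaussianIntegral n (X i * p) := by
  induction p using MvPolynomial.induction_on' with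
  | monomial d c =>
    rw [pderiv_monomial, X, monomial_mul, one_mul, gaussianIntegral_monomial,
      gaussianIntegral_monomial, Fintype.prod_eq_mul_prod_compl i,
      Fintype.prod_eq_mul_prod_compl i]
    have hoff : ∀ j ∈ ({i}ᶜ : Finset (Fin n)),
        gaussianMoment ((d - Finsupp.single i 1 : Fin n →₀ ℕ) j)
          = gaussianMoment ((Finsupp.single i 1 + d : Fin n →₀ ℕ) j) := by
      intro j hj
      have hji : i ≠ j := fun h => by simp [h] at hj
      simp [hji]
    rw [Finset.prod_congr rfl hoff]
    simp only [Finsupp.coe_tsub, Finsupp.coe_add, Pi.sub_apply, Pi.add_apply,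
      Finsupp.single_eq_same, add_comm 1, gaussianMoment_succ]
    ring
  | add p q hp hq => simp only [map_add, mul_add, hp, hq]

lemma gaussianIntegral_laplacian {p : MvPolynomial (Fin n) ℝ} {k : ℕ} (hp : p.IsHomogeneous k) :
    gaussianIntegral n (laplacian p) = k * gaussianIntegral n p := by
  simp only [laplacian, map_sum, gaussianIntegral_pderiv]
  rw [← map_sum, hp.sum_X_mul_pderiv, map_nsmul, nsmul_eq_mul]

lemma doubleFactorial_mul_gaussianIntegral (m : ℕ) {p : MvPolynomial (Fin n) ℝ}
    (hp : p.IsHomogeneous (2 * m)) :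
    (2 * m)‼ * gaussianIntegral n p = eval 0 (laplacian^[m] p) * gaussianIntegral n 1 := by
  induction m generalizing p with
  | zero =>
    rw [totalDegree_eq_zero_iff_eq_C.mp ((totalDegree_zero_iff_isHomogeneous _).mpr hp),
      C_eq_smul_one, map_smul]
    simp
  | succ m ih =>
    rw [Function.iterate_succ_apply, ← ih hp.laplacian, gaussianIntegral_laplacian hp,
      Nat.mul_succ, Nat.doubleFactorial_add_two]
    push_cast
    ring

lemma gaussianIntegral_eq_zero_of_odd {p : MvPolynomial (Fin n) ℝ} {k : ℕ}
    (hp : p.IsHomogeneous k) (hk : Odd k) : gaussianIntegral n p = 0 := by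
  have h := integral_neg_eq_self
    (fun x : EuclideanSpace ℝ (Fin n) => eval (fun i => x i) p * gaussianWeight ‖x‖) volume
  have hneg : ∀ x : EuclideanSpace ℝ (Fin n),
      eval (fun i => (-x) i) p = -eval (fun i => x i) p := fun x => calc
    _ = eval ((-1 : ℝ) • fun i => x i) p := by rw [neg_one_smul]; rfl
    _ = -eval (fun i => x i) p := by rw [hp.eval_smul, hk.neg_one_pow, neg_one_mul]
  simp only [hneg, norm_neg, neg_mul, integral_neg] at h
  rw [gaussianIntegral_apply]
  linarith

noncomputable def sphereIntegral (p : MvPolynomial (Fin n) ℝ) : ℝ :=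
  ∫ ω : sphere (0 : EuclideanSpace ℝ (Fin n)) 1,
      eval (fun i => (ω : EuclideanSpace ℝ (Fin n)) i) p
      ∂(volume : Measure (EuclideanSpace ℝ (Fin n))).toSphere

lemma integral_volumeIoiPow_pow_mul_gaussianWeight (k m : ℕ) :
    ∫ r : Ioi (0 : ℝ), (r : ℝ) ^ k * gaussianWeight r ∂(Measure.volumeIoiPow m)
      = halfGaussianMoment (m + k) := by
  simp only [Measure.volumeIoiPow, ENNReal.ofReal]
  rw [integral_withDensity_eq_integral_smul (by fun_prop), integral_subtype_comap measurableSet_Ioi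
      (fun r : ℝ => (r ^ m).toNNReal • (r ^ k * gaussianWeight r)), halfGaussianMoment]
  refine setIntegral_congr_fun measurableSet_Ioi fun r hr => ?_
  rw [NNReal.smul_def, Real.coe_toNNReal _ (pow_nonneg (le_of_lt hr) _), smul_eq_mul, pow_add]
  ring

lemma gaussianIntegral_eq_sphereIntegral_mul (hn : 0 < n) {p : MvPolynomial (Fin n) ℝ} {k : ℕ}
    (hp : p.IsHomogeneous k) :
    gaussianIntegral n p = sphereIntegral p * halfGaussianMoment (n - 1 + k) := by
  have : Nonempty (Fin n) := Fin.pos_iff_nonempty.mp hn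
  set E := EuclideanSpace ℝ (Fin n)
  have hpolar (x : E) (hx : x ≠ 0) : eval (fun i => x i) p * gaussianWeight ‖x‖
      = eval (fun i => (‖x‖⁻¹ • x) i) p * (‖x‖ ^ k * gaussianWeight ‖x‖) := by
    rw [show (fun i => (‖x‖⁻¹ • x) i) = ‖x‖⁻¹ • fun i => x i from rfl, hp.eval_smul, inv_pow]
    field_simp [pow_ne_zero k (norm_ne_zero_iff.mpr hx)]
  calc gaussianIntegral n p
      = ∫ x : ({0}ᶜ : Set E), eval (fun i => (x : E) i) p * gaussianWeight ‖(x : E)‖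
          ∂(volume.comap Subtype.val) := by
        rw [gaussianIntegral_apply, integral_subtype_comap (measurableSet_singleton _).compl
          (fun x : E => eval (fun i => x i) p * gaussianWeight ‖x‖), restrict_compl_singleton]
    _ = ∫ y : sphere (0 : E) 1 × Ioi (0 : ℝ),
          eval (fun i => (y.1 : E) i) p * ((y.2 : ℝ) ^ k * gaussianWeight y.2)
          ∂(volume.toSphere.prod (Measure.volumeIoiPow (Module.finrank ℝ E - 1))) := by
        rw [← (volume.measurePreserving_homeomorphUnitSphereProd).integral_comp
          (Homeomorph.measurableEmbedding _)]
        refine integral_congr_ae (Eventually.of_forall fun x => ?_)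
        simp only [homeomorphUnitSphereProd_apply_fst_coe, homeomorphUnitSphereProd_apply_snd_coe]
        exact hpolar x x.2
    _ = sphereIntegral p * halfGaussianMoment (n - 1 + k) := by
        rw [sphereIntegral,
          integral_prod_mul (fun ω : sphere (0 : E) 1 => eval (fun i => (ω : E) i) p)
            (fun r : Ioi (0 : ℝ) => (r : ℝ) ^ k * gaussianWeight r),
          integral_volumeIoiPow_pow_mul_gaussianWeight, finrank_euclideanSpace_fin]

lemma sphereIntegral_eq_zero_of_odd (hn : 0 < n) {p : MvPolynomial (Fin n) ℝ} {k : ℕ}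
    (hp : p.IsHomogeneous k) (hk : Odd k) : sphereIntegral p = 0 := by
  have h := gaussianIntegral_eq_sphereIntegral_mul hn hp
  rw [gaussianIntegral_eq_zero_of_odd hp hk] at h
  exact (mul_eq_zero.mp h.symm).resolve_right (halfGaussianMoment_pos _).ne'

lemma doubleFactorial_mul_sphereIntegral (q m : ℕ) {p : MvPolynomial (Fin (q + 2)) ℝ}
    (hp : p.IsHomogeneous (2 * m)) :
    (2 * m)‼ * (q + 2 * m)‼ * sphereIntegral p
      = q‼ * ((volume : Measure (EuclideanSpace ℝ (Fin (q + 2)))).toSphere Set.univ).toReal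
          * eval 0 (laplacian^[m] p) := by
  have hp_polar := gaussianIntegral_eq_sphereIntegral_mul (by omega) hp
  have hone_polar := gaussianIntegral_eq_sphereIntegral_mul (by omega)
    (isHomogeneous_one (Fin (q + 2)) ℝ)
  rw [show q + 2 - 1 + 2 * m = q + 1 + 2 * m by omega] at hp_polar
  simp only [show q + 2 - 1 + 0 = q + 1 by omega, sphereIntegral, map_one, integral_const,
    smul_eq_mul, mul_one, measureReal_def] at hone_polar
  have hiter := doubleFactorial_mul_gaussianIntegral m hp
  rw [hp_polar, hone_polar] at hiter
  apply mul_right_cancel₀ (halfGaussianMoment_pos (q + 1)).ne'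
  linear_combination
    (q‼ : ℝ) * hiter - ((2 * m)‼ * sphereIntegral p) * halfGaussianMoment_add_two_mul q m

end Gaussian

/-- Integration of a homogeneous polynomial `f` of degree `k` over the unit sphere
`S^{n-1}`: the integral vanishes for odd `k`, and for even `k` it equals
`(n-2)‼ · vol(S^{n-1}) / (k‼ · (n+k-2)‼)` times the constant `Δ^{k/2} f`. -/
theorem integral_sphere_homogeneous (n k : ℕ) (hn : 2 ≤ n)
    (f : MvPolynomial (Fin n) ℝ) (hf : f.IsHomogeneous k) :
    (Odd k →
      ∫ x : sphere (0 : EuclideanSpace ℝ (Fin n)) 1,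
          MvPolynomial.eval (fun i => (x : EuclideanSpace ℝ (Fin n)) i) f
        ∂((volume : Measure (EuclideanSpace ℝ (Fin n))).toSphere) = 0) ∧
    (Even k →
      ∫ x : sphere (0 : EuclideanSpace ℝ (Fin n)) 1,
          MvPolynomial.eval (fun i => (x : EuclideanSpace ℝ (Fin n)) i) f
        ∂((volume : Measure (EuclideanSpace ℝ (Fin n))).toSphere)
      = ((n - 2)‼ *
            (((volume : Measure (EuclideanSpace ℝ (Fin n))).toSphere Set.univ).toReal) /
            (k‼ * (n + k - 2)‼)) *
          MvPolynomial.eval 0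
            ((fun g : MvPolynomial (Fin n) ℝ =>
              ∑ i : Fin n, pderiv i (pderiv i g))^[k / 2] f)) := by
  obtain ⟨q, rfl⟩ : ∃ q, n = q + 2 := ⟨n - 2, by omega⟩
  refine ⟨sphereIntegral_eq_zero_of_odd (by omega) hf, fun ⟨m, hm⟩ => ?_⟩
  subst hm
  rw [← two_mul] at hf ⊢
  have h := doubleFactorial_mul_sphereIntegral q m hf
  rw [show q + 2 - 2 = q by omega, show q + 2 + 2 * m - 2 = q + 2 * m by omega,
    Nat.mul_div_cancel_left m two_pos]
  have hpos : (0 : ℝ) < (2 * m)‼ * (q + 2 * m)‼ := by positivity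
  rw [div_mul_eq_mul_div, eq_div_iff hpos.ne']
  exact (mul_comm _ _).trans h
end

section
/- The integral over the unit sphere S^{2n-1} ⊂ ℝ^{2n} of (Σ_{i=1}^n (x_i² + y_i²)²)² equals (4(n+5) / ((n+1)(n+2)(n+3))) · vol(S^{2n-1}). -/
/-!
Integrate `g(x) e^{-‖x‖²}` over `ℝ^{2n}` for a function `g` homogeneous of degree `k`. In polar
coordinates the integral factors as `(∫_{S^{2n-1}} g) · Γ(n + k/2)/2`; with `g = 1` this gives
`vol(S^{2n-1}) · (n-1)!/2 = πⁿ`. On the other hand, pairing the coordinates into `zᵢ = xᵢ + i yᵢ`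
turns the Gaussian into a product measure on `ℂⁿ`, under which the moments of `|zᵢ|²` are
`∫_ℂ |z|^{2m} e^{-|z|²} = π m!`. Expanding `(∑ᵢ |zᵢ|⁴)²` then gives
`πⁿ (24 n + 4 n (n - 1)) = 4 n (n + 5) πⁿ`, and dividing by the radial factor `(n+3)!/2` yields
the claim.
-/

open Finset Metric MeasureTheory Real Set Nat

lemma integral_Ioi_pow_mul_exp_neg_sq_odd (s : ℕ) :
    ∫ r in Ioi (0 : ℝ), r ^ (2 * s + 1) * rexp (-r ^ 2) = s ! / 2 := by
  have h := integral_rpow_mul_exp_neg_rpow (p := 2) (q := ((2 * s + 1 : ℕ) : ℝ)) two_pos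
    (neg_one_lt_zero.trans_le (Nat.cast_nonneg _))
  simp only [rpow_natCast, rpow_two] at h
  rw [h, show (((2 * s + 1 : ℕ) : ℝ) + 1) / 2 = s + 1 by push_cast; ring,
    Gamma_nat_eq_factorial]
  ring

lemma MeasureTheory.Measure.integral_volumeIoiPow (d : ℕ) (f : ℝ → ℝ) :
    ∫ r, f r ∂volumeIoiPow d = ∫ r in Ioi (0 : ℝ), r ^ d * f r := by
  simp only [Measure.volumeIoiPow, ENNReal.ofReal]
  rw [integral_withDensity_eq_integral_smul (measurable_subtype_coe.pow_const _).real_toNNReal,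
    integral_subtype_comap measurableSet_Ioi fun r => (r ^ d).toNNReal • f r]
  refine setIntegral_congr_fun measurableSet_Ioi fun r hr => ?_
  rw [NNReal.smul_def, Real.coe_toNNReal _ (pow_nonneg (le_of_lt hr) _), smul_eq_mul]

lemma integral_mul_exp_neg_norm_sq_of_homogeneous {E : Type*} [NormedAddCommGroup E]
    [NormedSpace ℝ E] [MeasurableSpace E] [BorelSpace E] [FiniteDimensional ℝ E] [Nontrivial E]
    (μ : Measure E) [μ.IsAddHaarMeasure] (k : ℕ) (g : E → ℝ)
    (hg : ∀ r : ℝ, 0 < r → ∀ x, g (r • x) = r ^ k * g x) :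
    ∫ x, g x * rexp (-‖x‖ ^ 2) ∂μ
      = (∫ ω : sphere (0 : E) 1, g ω ∂μ.toSphere) *
        ∫ r in Ioi (0 : ℝ), r ^ (Module.finrank ℝ E - 1 + k) * rexp (-r ^ 2) := by
  calc ∫ x, g x * rexp (-‖x‖ ^ 2) ∂μ
      = ∫ x : ({0}ᶜ : Set E), g x * rexp (-‖(x : E)‖ ^ 2) ∂μ.comap Subtype.val := by
        rw [integral_subtype_comap (measurableSet_singleton 0).compl
          fun x => g x * rexp (-‖x‖ ^ 2), restrict_compl_singleton]
    _ = ∫ p : sphere (0 : E) 1 × Ioi (0 : ℝ), g p.1 * ((p.2 : ℝ) ^ k * rexp (-(p.2 : ℝ) ^ 2))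
          ∂μ.toSphere.prod (Measure.volumeIoiPow (Module.finrank ℝ E - 1)) := by
        rw [← μ.measurePreserving_homeomorphUnitSphereProd.integral_comp
          (Homeomorph.measurableEmbedding _)]
        refine integral_congr_ae (.of_forall fun x => ?_)
        have hx : 0 < ‖(x : E)‖ := norm_pos_iff.2 x.2
        simp only [homeomorphUnitSphereProd_apply_fst_coe, homeomorphUnitSphereProd_apply_snd_coe]
        have scaling : g x = ‖(x : E)‖ ^ k * g (‖(x : E)‖⁻¹ • x) := by
          rw [← hg _ hx, smul_inv_smul₀ hx.ne']
        rw [scaling]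
        ring
    _ = _ := by
        rw [integral_prod_mul (fun ω : sphere (0 : E) 1 => g ω)
          fun r : Ioi (0 : ℝ) => (r : ℝ) ^ k * rexp (-(r : ℝ) ^ 2),
          Measure.integral_volumeIoiPow _ fun r => r ^ k * rexp (-r ^ 2)]
        simp_rw [pow_add, mul_assoc]

lemma Complex.integral_norm_sq_pow_mul_exp_neg_norm_sq (m : ℕ) :
    ∫ z : ℂ, (‖z‖ ^ 2) ^ m * rexp (-‖z‖ ^ 2) = π * m ! := by
  have h := Complex.integral_rpow_mul_exp_neg_rpow (p := 2) (q := ((2 * m : ℕ) : ℝ)) one_le_two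
    ((neg_lt_zero.2 two_pos).trans_le (Nat.cast_nonneg _))
  simp only [rpow_natCast, rpow_two, pow_mul] at h
  rw [h, show (((2 * m : ℕ) : ℝ) + 2) / 2 = m + 1 by push_cast; ring,
    Real.Gamma_nat_eq_factorial]
  ring

section Moments

variable {ι : Type*} [Fintype ι]

lemma integral_prod_norm_sq_pow_mul_exp_neg_norm_sq (c : ι → ℕ) :
    ∫ z : ι → ℂ, ∏ k, (‖z k‖ ^ 2) ^ c k * rexp (-‖z k‖ ^ 2) = ∏ k, π * (c k) ! := by
  simp_rw [← Complex.integral_norm_sq_pow_mul_exp_neg_norm_sq]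
  exact integral_fintype_prod_eq_prod (fun k (w : ℂ) => (‖w‖ ^ 2) ^ c k * rexp (-‖w‖ ^ 2))

lemma integrable_prod_norm_sq_pow_mul_exp_neg_norm_sq (c : ι → ℕ) :
    Integrable fun z : ι → ℂ => ∏ k, (‖z k‖ ^ 2) ^ c k * rexp (-‖z k‖ ^ 2) := by
  refine Integrable.fintype_prod (f := fun k (w : ℂ) => (‖w‖ ^ 2) ^ c k * rexp (-‖w‖ ^ 2))
    fun k => Integrable.of_integral_ne_zero ?_
  rw [Complex.integral_norm_sq_pow_mul_exp_neg_norm_sq]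
  positivity

section Expansion

variable [DecidableEq ι]

lemma prod_pow_single_add_single {R : Type*} [CommMonoid R] (q : ι → R) (i j : ι) (a b : ℕ) :
    ∏ k, q k ^ (Pi.single i a + Pi.single j b : ι → ℕ) k = q i ^ a * q j ^ b := by
  simp only [Pi.add_apply, pow_add, prod_mul_distrib, Pi.single_apply, pow_ite, pow_zero,
    prod_ite_eq', Finset.mem_univ, ↓reduceIte]

lemma sq_sum_sq_eq_sum_sum_prod_pow {R : Type*} [CommSemiring R] (q : ι → R) :
    (∑ i, q i ^ 2) ^ 2 = ∑ i, ∑ j, ∏ k, q k ^ (Pi.single i 2 + Pi.single j 2 : ι → ℕ) k := by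
  simp_rw [prod_pow_single_add_single, sq (∑ i, _), sum_mul_sum]

lemma prod_factorial_single_two_add_single_two (i j : ι) :
    ∏ k, ((Pi.single i 2 + Pi.single j 2 : ι → ℕ) k) ! = if i = j then 24 else 4 := by
  split_ifs with h
  · subst h
    rw [Fintype.prod_eq_single i fun k hk => by simp [hk]]
    simp [factorial]
  · rw [Fintype.prod_eq_mul i j h fun k hk => by simp [hk.1, hk.2]]
    simp [h, Ne.symm h]

lemma sum_sum_ite_eq_const {R : Type*} [CommRing R] (a b : R) :
    ∑ i : ι, ∑ j : ι, (if i = j then a else b)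
      = Fintype.card ι * (a - b) + Fintype.card ι ^ 2 * b := by
  have split : ∀ i j : ι, (if i = j then a else b) = b + if i = j then a - b else 0 := by
    intro i j; split_ifs <;> ring
  simp only [split, sum_add_distrib, sum_ite_eq, sum_const, Finset.card_univ, Finset.mem_univ,
    ↓reduceIte, nsmul_eq_mul]
  ring

end Expansion

lemma integral_sq_sum_norm_pow_four_mul_exp_neg_norm_sq :
    ∫ z : ι → ℂ, (∑ i, (‖z i‖ ^ 2) ^ 2) ^ 2 * ∏ k, rexp (-‖z k‖ ^ 2)
      = π ^ Fintype.card ι * (4 * Fintype.card ι * (Fintype.card ι + 5)) := by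
  classical
  have expand : ∀ z : ι → ℂ, (∑ i, (‖z i‖ ^ 2) ^ 2) ^ 2 * ∏ k, rexp (-‖z k‖ ^ 2)
      = ∑ i, ∑ j, ∏ k, (‖z k‖ ^ 2) ^ (Pi.single i 2 + Pi.single j 2 : ι → ℕ) k *
          rexp (-‖z k‖ ^ 2) := fun z => by
    simp_rw [sq_sum_sq_eq_sum_sum_prod_pow, sum_mul, prod_mul_distrib]
  have integrable := fun i j =>
    integrable_prod_norm_sq_pow_mul_exp_neg_norm_sq (Pi.single i 2 + Pi.single j 2 : ι → ℕ)
  simp_rw [expand]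
  rw [integral_finsetSum _ fun i _ => integrable_finsetSum _ fun j _ => integrable i j]
  simp_rw [integral_finsetSum _ fun j _ => integrable _ j,
    integral_prod_norm_sq_pow_mul_exp_neg_norm_sq, prod_mul_distrib, prod_const]
  simp only [← Nat.cast_prod, prod_factorial_single_two_add_single_two, Finset.card_univ,
    ← mul_sum]
  push_cast
  rw [sum_sum_ite_eq_const]
  ring

end Moments

section ComplexCoordinates

variable {ι : Type*}

noncomputable def EuclideanSpace.measurableEquivComplexPi (ι : Type*) :
    EuclideanSpace ℝ (ι ⊕ ι) ≃ᵐ (ι → ℂ) :=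
  (MeasurableEquiv.toLp 2 _).symm.trans <| (MeasurableEquiv.sumPiEquivProdPi _).trans <|
    (MeasurableEquiv.arrowProdEquivProdArrow ℝ ℝ ι).symm.trans <|
      MeasurableEquiv.piCongrRight fun _ => Complex.measurableEquivRealProd.symm

lemma EuclideanSpace.measurableEquivComplexPi_apply (x : EuclideanSpace ℝ (ι ⊕ ι)) (k : ι) :
    measurableEquivComplexPi ι x k = ⟨x (.inl k), x (.inr k)⟩ := rfl

lemma EuclideanSpace.norm_measurableEquivComplexPi_sq (x : EuclideanSpace ℝ (ι ⊕ ι)) (k : ι) :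
    ‖measurableEquivComplexPi ι x k‖ ^ 2 = x (.inl k) ^ 2 + x (.inr k) ^ 2 := by
  rw [measurableEquivComplexPi_apply, Complex.sq_norm, Complex.normSq_mk]
  ring

variable [Fintype ι]

lemma EuclideanSpace.measurePreserving_measurableEquivComplexPi :
    MeasurePreserving (measurableEquivComplexPi ι) :=
  (volume_preserving_symm_measurableEquiv_toLp _).trans <|
    (measurePreserving_sumPiEquivProdPi _).trans <|
      (volume_measurePreserving_arrowProdEquivProdArrow ℝ ℝ ι).symm.trans <|
        volume_preserving_pi fun _ => Complex.volume_preserving_equiv_real_prod.symm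

lemma EuclideanSpace.integral_comp_measurableEquivComplexPi_mul_exp_neg_norm_sq
    (F : (ι → ℂ) → ℝ) :
    ∫ x : EuclideanSpace ℝ (ι ⊕ ι), F (measurableEquivComplexPi ι x) * rexp (-‖x‖ ^ 2)
      = ∫ z : ι → ℂ, F z * ∏ k, rexp (-‖z k‖ ^ 2) := by
  have norm_sq : ∀ x : EuclideanSpace ℝ (ι ⊕ ι),
      ‖x‖ ^ 2 = ∑ k, ‖measurableEquivComplexPi ι x k‖ ^ 2 := fun x => by
    simp only [norm_sq_eq, Fintype.sum_sum_type, norm_measurableEquivComplexPi_sq,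
      Real.norm_eq_abs, sq_abs, sum_add_distrib]
  simp_rw [norm_sq, ← sum_neg_distrib, exp_sum]
  exact measurePreserving_measurableEquivComplexPi.integral_comp' fun z =>
    F z * ∏ k, rexp (-‖z k‖ ^ 2)

lemma EuclideanSpace.integral_exp_neg_norm_sq_sum :
    ∫ x : EuclideanSpace ℝ (ι ⊕ ι), rexp (-‖x‖ ^ 2) = π ^ Fintype.card ι := by
  have gaussian := integral_prod_norm_sq_pow_mul_exp_neg_norm_sq (0 : ι → ℕ)
  simp only [Pi.zero_apply, pow_zero, one_mul, factorial_zero, cast_one, mul_one, prod_const,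
    Finset.card_univ] at gaussian
  simpa [gaussian] using integral_comp_measurableEquivComplexPi_mul_exp_neg_norm_sq (ι := ι)
    fun _ => 1

lemma EuclideanSpace.integral_sq_sum_sq_add_sq_sq_mul_exp_neg_norm_sq :
    ∫ x : EuclideanSpace ℝ (ι ⊕ ι),
        (∑ i, (x (.inl i) ^ 2 + x (.inr i) ^ 2) ^ 2) ^ 2 * rexp (-‖x‖ ^ 2)
      = π ^ Fintype.card ι * (4 * Fintype.card ι * (Fintype.card ι + 5)) := by
  simp_rw [← norm_measurableEquivComplexPi_sq]
  rw [integral_comp_measurableEquivComplexPi_mul_exp_neg_norm_sq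
    fun z => (∑ i, (‖z i‖ ^ 2) ^ 2) ^ 2, integral_sq_sum_norm_pow_four_mul_exp_neg_norm_sq]

end ComplexCoordinates

/-- `∫_{S^{2n-1}} (∑ᵢ (xᵢ² + yᵢ²)²)² dS = (4(n+5) / ((n+1)(n+2)(n+3))) · vol(S^{2n-1})`,
where `S^{2n-1}` is the unit sphere in `ℝ^{2n}` with coordinates `x₁,…,xₙ,y₁,…,yₙ`. -/
theorem integral_sphere_H8 (n : ℕ) (hn : 0 < n) :
    ∫ v : sphere (0 : EuclideanSpace ℝ (Fin n ⊕ Fin n)) 1,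
        (∑ i : Fin n,
            (((v : EuclideanSpace ℝ (Fin n ⊕ Fin n)) (Sum.inl i)) ^ 2 +
              ((v : EuclideanSpace ℝ (Fin n ⊕ Fin n)) (Sum.inr i)) ^ 2) ^ 2) ^ 2
      ∂((volume : Measure (EuclideanSpace ℝ (Fin n ⊕ Fin n))).toSphere)
    = 4 * (n + 5) / ((n + 1) * (n + 2) * (n + 3)) *
        (((volume : Measure (EuclideanSpace ℝ (Fin n ⊕ Fin n))).toSphere Set.univ).toReal) := by
  obtain ⟨m, rfl⟩ : ∃ m, n = m + 1 := ⟨n - 1, by omega⟩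
  have hdim : Module.finrank ℝ (EuclideanSpace ℝ (Fin (m + 1) ⊕ Fin (m + 1))) = 2 * m + 2 := by
    simp only [finrank_euclideanSpace, Fintype.card_sum, Fintype.card_fin]; ring
  have : Nontrivial (EuclideanSpace ℝ (Fin (m + 1) ⊕ Fin (m + 1))) :=
    Module.nontrivial_of_finrank_pos (R := ℝ) (by omega)
  have moment := integral_mul_exp_neg_norm_sq_of_homogeneous volume 8
    (fun x : EuclideanSpace ℝ (Fin (m + 1) ⊕ Fin (m + 1)) =>
      (∑ i, (x (.inl i) ^ 2 + x (.inr i) ^ 2) ^ 2) ^ 2)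
    fun r _ x => by simp only [PiLp.smul_apply, smul_eq_mul, mul_pow, ← mul_add, ← mul_sum]; ring
  have mass := integral_mul_exp_neg_norm_sq_of_homogeneous
    (volume : Measure (EuclideanSpace ℝ (Fin (m + 1) ⊕ Fin (m + 1)))) 0 (fun _ => 1) (by simp)
  rw [EuclideanSpace.integral_sq_sum_sq_add_sq_sq_mul_exp_neg_norm_sq, hdim,
    show 2 * m + 2 - 1 + 8 = 2 * (m + 4) + 1 by omega,
    integral_Ioi_pow_mul_exp_neg_sq_odd] at moment
  simp only [one_mul, integral_const, smul_eq_mul, mul_one, Measure.real] at mass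
  rw [EuclideanSpace.integral_exp_neg_norm_sq_sum, hdim,
    show 2 * m + 2 - 1 + 0 = 2 * m + 1 by omega, integral_Ioi_pow_mul_exp_neg_sq_odd] at mass
  have factorial_eq : ((m + 4)! : ℝ) = (m + 4) * (m + 3) * (m + 2) * (m + 1) * m ! := by
    push_cast [factorial_succ]; ring
  simp only [Fintype.card_fin] at moment mass
  rw [mass, factorial_eq] at moment
  push_cast at moment ⊢
  rw [div_mul_eq_mul_div, eq_div_iff (by positivity)]
  apply mul_right_cancel₀ (show ((m + 1) * m ! : ℝ) ≠ 0 by positivity)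
  linear_combination (-2) * moment
end
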